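/- If G is a König-Egerváry graph (α(G) + μ(G) = |V(G)|), then the following are equivalent: (i) α(G) = |V(G)|/2; (ii) G has a perfect matching; (iii) every stable set S of G satisfies |S| ≤ |N(S)|; (iv) |core(G)| ≤ |N(core(G))|. -/

import Mathlib

open Finset

variable {V : Type*} [Fintype V] [DecidableEq V]

/-  A set of vertices is stable (independent) if no two of its vertices are adjacent. -/
def stable (G : SimpleGraph V) (S : Finset V) : Prop :=
  ∀ a ∈ S, ∀ b ∈ S, ¬ G.Adj a b

/-  The (open) neighborhood of a set of vertices. -/
open Classical in
noncomputable def nbhd (G : SimpleGraph V) (A : Finset V) : Finset V :=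
  Finset.univ.filter fun v => ∃ a ∈ A, G.Adj a v

/-  The stability number: maximum size of a stable set. -/
open Classical in
noncomputable def alpha (G : SimpleGraph V) : ℕ :=
  Finset.univ.sup fun S : Finset V => if stable G S then S.card else 0

/-  A maximum stable set. -/
def maxStable (G : SimpleGraph V) (S : Finset V) : Prop :=
  stable G S ∧ S.card = alpha G

/-  core(G): the intersection of all maximum stable sets. -/
open Classical in
noncomputable def core (G : SimpleGraph V) : Finset V :=
  Finset.univ.filter fun v => ∀ S : Finset V, maxStable G S → v ∈ S

/-  A vertex is isolated if it has no neighbors. -/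
def isolated (G : SimpleGraph V) (v : V) : Prop := ∀ w, ¬ G.Adj v w

/-  The set of isolated vertices. -/
open Classical in
noncomputable def isol (G : SimpleGraph V) : Finset V :=
  Finset.univ.filter fun v => isolated G v

/-  A matching: a set of edges of G, pairwise sharing no vertex. -/
def isMatching (G : SimpleGraph V) (M : Finset (Sym2 V)) : Prop :=
  (∀ e ∈ M, e ∈ G.edgeSet) ∧
  ∀ e ∈ M, ∀ f ∈ M, e ≠ f → ∀ v : V, ¬(v ∈ e ∧ v ∈ f)

/-  μ(G): maximum size of a matching. -/
open Classical in
noncomputable def mu (G : SimpleGraph V) : ℕ :=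
  Finset.univ.sup fun M : Finset (Sym2 V) => if isMatching G M then M.card else 0

/-  For a König-Egerváry graph G, the following are equivalent:
(i) α(G) = |V(G)|/2; (ii) G has a perfect matching;
(iii) |S| ≤ |N(S)| for every stable set S (quasi-regularizability);
(iv) |core(G)| ≤ |N(core(G))|. -/

lemma sym2_rep (e : Sym2 V) : ∃ x y, e = s(x, y) := by
  induction e using Sym2.ind with
  | _ x y => exact ⟨x, y, rfl⟩

lemma stable_empty (G : SimpleGraph V) : stable G (∅ : Finset V) := by
  intro a ha; simp at ha

lemma matching_empty (G : SimpleGraph V) : isMatching G (∅ : Finset (Sym2 V)) := by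
  constructor <;> intro e he <;> simp at he

lemma card_le_alpha (G : SimpleGraph V) {S : Finset V} (hS : stable G S) :
    S.card ≤ alpha G := by
  classical
  have h := Finset.le_sup (f := fun S : Finset V => if stable G S then S.card else 0)
    (Finset.mem_univ S)
  simpa [alpha, hS] using h

lemma card_le_mu (G : SimpleGraph V) {M : Finset (Sym2 V)} (hM : isMatching G M) :
    M.card ≤ mu G := by
  classical
  have h := Finset.le_sup (f := fun M : Finset (Sym2 V) => if isMatching G M then M.card else 0)
    (Finset.mem_univ M)
  simpa [mu, hM] using h

open Classical in
lemma exists_maxStable (G : SimpleGraph V) : ∃ S, maxStable G S := by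
  obtain ⟨S, -, hS⟩ := Finset.exists_mem_eq_sup (Finset.univ : Finset (Finset V))
    Finset.univ_nonempty (fun S : Finset V => if stable G S then S.card else 0)
  have halpha : alpha G = if stable G S then S.card else 0 := hS
  by_cases h : stable G S
  · exact ⟨S, h, by rw [halpha, if_pos h]⟩
  · exact ⟨∅, stable_empty G, by rw [Finset.card_empty, halpha, if_neg h]⟩

open Classical in
lemma exists_maxMatching (G : SimpleGraph V) : ∃ M, isMatching G M ∧ M.card = mu G := by
  obtain ⟨M, -, hM⟩ := Finset.exists_mem_eq_sup (Finset.univ : Finset (Finset (Sym2 V)))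
    Finset.univ_nonempty (fun M : Finset (Sym2 V) => if isMatching G M then M.card else 0)
  have hmu : mu G = if isMatching G M then M.card else 0 := hM
  by_cases h : isMatching G M
  · exact ⟨M, h, by rw [hmu, if_pos h]⟩
  · exact ⟨∅, matching_empty G, by rw [Finset.card_empty, hmu, if_neg h]⟩

lemma core_subset (G : SimpleGraph V) {S : Finset V} (hS : maxStable G S) :
    core G ⊆ S := by
  intro v hv
  classical
  rw [core, Finset.mem_filter] at hv
  exact hv.2 S hS

lemma stable_subset (G : SimpleGraph V) {S T : Finset V} (h : S ⊆ T) (hT : stable G T) :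
    stable G S := fun a ha b hb => hT a (h ha) b (h hb)

lemma core_stable (G : SimpleGraph V) : stable G (core G) := by
  obtain ⟨S, hS⟩ := exists_maxStable G
  exact stable_subset G (core_subset G hS) hS.1

lemma adj_of_two_mem (G : SimpleGraph V) {e : Sym2 V} (he : e ∈ G.edgeSet)
    {x y : V} (hx : x ∈ e) (hy : y ∈ e) (hxy : x ≠ y) : G.Adj x y := by
  obtain ⟨a, b, rfl⟩ := sym2_rep e
  rw [Sym2.mem_iff] at hx hy
  rw [SimpleGraph.mem_edgeSet] at he
  rcases hx with rfl | rfl <;> rcases hy with rfl | rfl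
  · exact absurd rfl hxy
  · exact he
  · exact he.symm
  · exact absurd rfl hxy

lemma matching_cover_card (G : SimpleGraph V) {M : Finset (Sym2 V)} (hM : isMatching G M) :
    (M.biUnion (fun e => Finset.univ.filter (· ∈ e))).card = 2 * M.card := by
  classical
  rw [Finset.card_biUnion]
  · rw [Finset.sum_congr rfl (g := fun _ => 2), Finset.sum_const, smul_eq_mul, mul_comm]
    intro e he
    obtain ⟨x, y, rfl⟩ := sym2_rep e
    have hxy : x ≠ y := (G.ne_of_adj (G.mem_edgeSet.mp (hM.1 _ he)))
    have : (Finset.univ.filter (· ∈ s(x, y))) = {x, y} := by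
      ext v; simp [Sym2.mem_iff]
    rw [this, Finset.card_pair hxy]
  · intro e he f hf hef
    rw [Function.onFun, Finset.disjoint_left]
    intro v hv hv'
    simp only [Finset.mem_filter, Finset.mem_univ, true_and] at hv hv'
    exact hM.2 e he f hf hef v ⟨hv, hv'⟩

lemma two_mul_matching_le (G : SimpleGraph V) {M : Finset (Sym2 V)} (hM : isMatching G M) :
    2 * M.card ≤ Fintype.card V := by
  rw [← matching_cover_card G hM, ← Finset.card_univ]
  exact Finset.card_le_card (Finset.subset_univ _)

lemma key_structure (G : SimpleGraph V) (hKE : alpha G + mu G = Fintype.card V)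
    {T : Finset V} (hT : maxStable G T)
    {M : Finset (Sym2 V)} (hM : isMatching G M) (hMc : M.card = mu G) :
    (∀ v : V, v ∉ T → ∃ e ∈ M, v ∈ e) ∧
    (∀ e ∈ M, ∀ v ∈ e, v ∉ T → ∀ w ∈ e, w ≠ v → w ∈ T) := by
  classical
  set g : Sym2 V → Finset V := fun e => Finset.univ.filter (fun v => v ∈ e ∧ v ∉ T) with hg
  have hdisj : ∀ e ∈ M, ∀ f ∈ M, e ≠ f → Disjoint (g e) (g f) := by
    intro e he f hf hef
    rw [Finset.disjoint_left]
    intro v hv hv'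
    simp only [hg, Finset.mem_filter, Finset.mem_univ, true_and] at hv hv'
    exact hM.2 e he f hf hef v ⟨hv.1, hv'.1⟩
  have hcardB : (M.biUnion g).card = ∑ e ∈ M, (g e).card := Finset.card_biUnion hdisj
  have hone : ∀ e ∈ M, 1 ≤ (g e).card := by
    intro e he
    obtain ⟨x, y, rfl⟩ := sym2_rep e
    have hadj : G.Adj x y := G.mem_edgeSet.mp (hM.1 _ he)
    rcases Classical.em (x ∈ T) with hx | hx
    · have hy : y ∉ T := fun hy => hT.1 x hx y hy hadj
      refine Finset.card_pos.mpr ⟨y, ?_⟩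
      simp [hg, hy, Sym2.mem_iff]
    · refine Finset.card_pos.mpr ⟨x, ?_⟩
      simp [hg, hx, Sym2.mem_iff]
  have hsub : M.biUnion g ⊆ Tᶜ := by
    intro v hv
    rw [Finset.mem_biUnion] at hv
    obtain ⟨e, he, hv⟩ := hv
    simp only [hg, Finset.mem_filter] at hv
    exact Finset.mem_compl.mpr hv.2.2
  have hTcard : Tᶜ.card = mu G := by
    rw [Finset.card_compl, hT.2]
    omega
  have hle1 : M.card ≤ ∑ e ∈ M, (g e).card := by
    calc M.card = ∑ _e ∈ M, 1 := by simp
    _ ≤ ∑ e ∈ M, (g e).card := Finset.sum_le_sum hone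
  have hle2 : ∑ e ∈ M, (g e).card ≤ Tᶜ.card := by
    rw [← hcardB]; exact Finset.card_le_card hsub
  have hsum : ∑ e ∈ M, (g e).card = M.card := by omega
  have hcards : ∀ e ∈ M, (g e).card = 1 := by
    have := (Finset.sum_eq_sum_iff_of_le hone).mp (by simpa using hsum.symm)
    intro e he; exact (this e he).symm
  have hBeq : M.biUnion g = Tᶜ := by
    apply Finset.eq_of_subset_of_card_le hsub
    rw [hcardB, hsum, hMc, hTcard]
  constructor
  · intro v hv
    have : v ∈ M.biUnion g := by rw [hBeq]; exact Finset.mem_compl.mpr hv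
    rw [Finset.mem_biUnion] at this
    obtain ⟨e, he, hve⟩ := this
    simp only [hg, Finset.mem_filter] at hve
    exact ⟨e, he, hve.2.1⟩
  · intro e he v hv hvT w hw hwv
    by_contra hwT
    have h2 : ({v, w} : Finset V) ⊆ g e := by
      intro z hz
      rcases Finset.mem_insert.mp hz with rfl | hz
      · simp [hg, hv, hvT]
      · rw [Finset.mem_singleton] at hz; subst hz; simp [hg, hw, hwT]
    have := Finset.card_le_card h2
    rw [Finset.card_pair (Ne.symm hwv), hcards e he] at this
    omega


theorem stmt18 (G : SimpleGraph V) (hKE : alpha G + mu G = Fintype.card V) :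
    ((2 * alpha G = Fintype.card V) ↔
        ∃ M : Finset (Sym2 V), isMatching G M ∧ ∀ v : V, ∃ e ∈ M, v ∈ e) ∧
    ((2 * alpha G = Fintype.card V) ↔
        ∀ S : Finset V, stable G S → S.card ≤ (nbhd G S).card) ∧
    ((2 * alpha G = Fintype.card V) ↔
        (core G).card ≤ (nbhd G (core G)).card) := by
  classical
  obtain ⟨T, hT⟩ := exists_maxStable G
  obtain ⟨M, hM, hMc⟩ := exists_maxMatching G
  have h2mu : 2 * mu G ≤ Fintype.card V := hMc ▸ two_mul_matching_le G hM
  -- (i) → (ii)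
  have hi_ii : 2 * alpha G = Fintype.card V →
      ∃ M' : Finset (Sym2 V), isMatching G M' ∧ ∀ v : V, ∃ e ∈ M', v ∈ e := by
    intro h
    refine ⟨M, hM, ?_⟩
    have hBcard : (M.biUnion (fun e => Finset.univ.filter (· ∈ e))).card = Fintype.card V := by
      rw [matching_cover_card G hM, hMc]; omega
    have hBeq : M.biUnion (fun e => Finset.univ.filter (· ∈ e)) = Finset.univ := by
      apply Finset.eq_of_subset_of_card_le (Finset.subset_univ _)
      rw [hBcard, Finset.card_univ]
    intro v
    have hv : v ∈ M.biUnion (fun e => Finset.univ.filter (· ∈ e)) := by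
      rw [hBeq]; exact Finset.mem_univ v
    rw [Finset.mem_biUnion] at hv
    obtain ⟨e, he, hv⟩ := hv
    exact ⟨e, he, (Finset.mem_filter.mp hv).2⟩
  -- (ii) → (i)
  have hii_i : (∃ M' : Finset (Sym2 V), isMatching G M' ∧ ∀ v : V, ∃ e ∈ M', v ∈ e) →
      2 * alpha G = Fintype.card V := by
    rintro ⟨M', hM', hcov⟩
    have hBeq : M'.biUnion (fun e => Finset.univ.filter (· ∈ e)) = Finset.univ :=
      Finset.eq_univ_iff_forall.mpr (fun v => by
        obtain ⟨e, he, hv⟩ := hcov v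
        exact Finset.mem_biUnion.mpr ⟨e, he, Finset.mem_filter.mpr ⟨Finset.mem_univ v, hv⟩⟩)
    have hcc := matching_cover_card G hM'
    rw [hBeq, Finset.card_univ] at hcc
    have hle := card_le_mu G hM'
    omega
  -- (i) → (iii)
  have hi_iii : 2 * alpha G = Fintype.card V →
      ∀ S : Finset V, stable G S → S.card ≤ (nbhd G S).card := by
    intro h S hS
    obtain ⟨M0, hM0, hcov⟩ := hi_ii h
    have hcov' : ∀ v : V, ∃ e, e ∈ M0 ∧ v ∈ e := fun v => by
      obtain ⟨e, he, hv⟩ := hcov v; exact ⟨e, he, hv⟩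
    set p : V → V := fun v => Sym2.Mem.other' (hcov' v).choose_spec.2 with hp
    have hpe : ∀ v : V, s(v, p v) = (hcov' v).choose := fun v => Sym2.other_spec' _
    have hadj : ∀ v : V, G.Adj v (p v) := by
      intro v
      have he := hM0.1 _ (hcov' v).choose_spec.1
      rw [← hpe v] at he
      exact G.mem_edgeSet.mp he
    have hpmem : ∀ v : V, p v ∈ (hcov' v).choose := by
      intro v; rw [← hpe v]; exact Sym2.mem_mk_right v (p v)
    apply Finset.card_le_card_of_injOn p
    · intro s hs
      rw [nbhd, Finset.mem_coe, Finset.mem_filter]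
      exact ⟨Finset.mem_univ _, s, hs, hadj s⟩
    · intro s1 h1 s2 h2 heq
      have he1 := (hcov' s1).choose_spec.1
      have he2 := (hcov' s2).choose_spec.1
      have heq' : (hcov' s1).choose = (hcov' s2).choose := by
        by_contra hne
        refine hM0.2 _ he1 _ he2 hne (p s1) ⟨hpmem s1, ?_⟩
        rw [heq]; exact hpmem s2
      have hss : s(s1, p s1) = s(s2, p s2) := by rw [hpe s1, hpe s2, heq']
      rw [Sym2.eq_iff] at hss
      rcases hss with ⟨h', -⟩ | ⟨ha, hb⟩
      · exact h'
      · exact ha.trans (heq.symm.trans hb)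
  -- (iv) → (i)
  have hiv_i : (core G).card ≤ (nbhd G (core G)).card → 2 * alpha G = Fintype.card V := by
    intro hiv
    have key := key_structure G hKE hT hM hMc
    set A : Finset V := T.filter (fun v => ¬∃ e ∈ M, v ∈ e) with hA
    have hAcore : A ⊆ core G := by
      intro a ha
      rw [hA, Finset.mem_filter] at ha
      rw [core, Finset.mem_filter]
      refine ⟨Finset.mem_univ _, fun T' hT' => ?_⟩
      by_contra haT'
      exact ha.2 ((key_structure G hKE hT' hM hMc).1 a haT')
    have hnmem : ∀ v ∈ nbhd G (core G), ∀ T', maxStable G T' → v ∉ T' := by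
      intro v hv T' hT' hvT'
      rw [nbhd, Finset.mem_filter] at hv
      obtain ⟨-, c, hc, hcadj⟩ := hv
      exact hT'.1 c (core_subset G hT' hc) v hvT' hcadj
    have hcov2 : ∀ v ∈ nbhd G (core G), ∃ e, e ∈ M ∧ v ∈ e := by
      intro v hv
      obtain ⟨e, he, hv'⟩ := key.1 v (hnmem v hv T hT)
      exact ⟨e, he, hv'⟩
    set f : V → V := fun v =>
      if h : ∃ e, e ∈ M ∧ v ∈ e then Sym2.Mem.other' h.choose_spec.2 else v with hf
    have hfeq : ∀ v (hv : v ∈ nbhd G (core G)), s(v, f v) = (hcov2 v hv).choose := by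
      intro v hv
      simp only [hf]
      rw [dif_pos (hcov2 v hv)]
      exact Sym2.other_spec' _
    have hfmem : ∀ v (hv : v ∈ nbhd G (core G)), f v ∈ (hcov2 v hv).choose := by
      intro v hv
      rw [← hfeq v hv]; exact Sym2.mem_mk_right v (f v)
    have hfadj : ∀ v (hv : v ∈ nbhd G (core G)), G.Adj v (f v) := by
      intro v hv
      have he := hM.1 _ (hcov2 v hv).choose_spec.1
      rw [← hfeq v hv] at he
      exact G.mem_edgeSet.mp he
    have hinj : (nbhd G (core G)).card ≤ (core G \ A).card := by
      apply Finset.card_le_card_of_injOn f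
      · intro v hv'
        have hv : v ∈ nbhd G (core G) := hv'
        rw [Finset.mem_coe, Finset.mem_sdiff]
        constructor
        · rw [core, Finset.mem_filter]
          refine ⟨Finset.mem_univ _, fun T' hT' => ?_⟩
          exact (key_structure G hKE hT' hM hMc).2 _ (hcov2 v hv).choose_spec.1 v
            (hcov2 v hv).choose_spec.2 (hnmem v hv T' hT') (f v) (hfmem v hv)
            (hfadj v hv).ne'
        · intro hfA
          rw [hA, Finset.mem_filter] at hfA
          exact hfA.2 ⟨_, (hcov2 v hv).choose_spec.1, hfmem v hv⟩
      · intro v1 hv1' v2 hv2' heq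
        have hv1 : v1 ∈ nbhd G (core G) := hv1'
        have hv2 : v2 ∈ nbhd G (core G) := hv2'
        have heq' : (hcov2 v1 hv1).choose = (hcov2 v2 hv2).choose := by
          by_contra hne
          refine hM.2 _ (hcov2 v1 hv1).choose_spec.1 _ (hcov2 v2 hv2).choose_spec.1 hne
            (f v1) ⟨hfmem v1 hv1, ?_⟩
          rw [heq]; exact hfmem v2 hv2
        have hss : s(v1, f v1) = s(v2, f v2) := by rw [hfeq v1 hv1, hfeq v2 hv2, heq']
        rw [Sym2.eq_iff] at hss
        rcases hss with ⟨h', -⟩ | ⟨ha, hb⟩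
        · exact h'
        · exact ha.trans (heq.symm.trans hb)
    have hsdiff : (core G \ A).card = (core G).card - A.card := Finset.card_sdiff_of_subset hAcore
    have hAle : A.card ≤ (core G).card := Finset.card_le_card hAcore
    have hA0 : A.card = 0 := by omega
    have hAempty : A = ∅ := Finset.card_eq_zero.mp hA0
    have hTcov : ∀ t ∈ T, ∃ e, e ∈ M ∧ t ∈ e := by
      intro t ht
      by_contra hc
      have htA : t ∈ A := by rw [hA, Finset.mem_filter]; exact ⟨ht, hc⟩
      rw [hAempty] at htA
      simp at htA
    set g2 : V → Sym2 V := fun t =>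
      if h : ∃ e, e ∈ M ∧ t ∈ e then h.choose else s(t, t) with hg2
    have hg2m : ∀ t ∈ T, g2 t ∈ M ∧ t ∈ g2 t := by
      intro t ht
      have h := hTcov t ht
      simp only [hg2]
      rw [dif_pos h]
      exact ⟨h.choose_spec.1, h.choose_spec.2⟩
    have hTleM : T.card ≤ M.card := by
      apply Finset.card_le_card_of_injOn g2
      · exact fun t ht => (hg2m t ht).1
      · intro t1 h1' t2 h2' heq
        have h1 : t1 ∈ T := h1'
        have h2 : t2 ∈ T := h2'
        by_contra hne
        refine hT.1 t1 h1 t2 h2 (adj_of_two_mem G (hM.1 _ (hg2m t1 h1).1)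
          (hg2m t1 h1).2 ?_ hne)
        rw [heq]; exact (hg2m t2 h2).2
    have halphamu : alpha G ≤ mu G := by rw [← hT.2, ← hMc]; exact hTleM
    omega
  exact ⟨⟨hi_ii, hii_i⟩,
    ⟨hi_iii, fun h => hiv_i (h (core G) (core_stable G))⟩,
    ⟨fun h => hi_iii h (core G) (core_stable G), hiv_i⟩⟩
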